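/- arXiv:1310.7648 — 3 statements merged into one kernel-verified Lean document; each statement's English description precedes it below -/
import Mathlib

section
/- For β, γ > 0, ∫₀^∞ exp(−β/(4x) − γx) dx = √(β/γ) · K₁(√(βγ)), where K₁ is the modified Bessel function of the second kind of order 1. -/
/-!
Rescaling `x = (√(β/γ)/2) y` turns the exponent into `-(a/2)(y + y⁻¹)` with `a = √(βγ)`, and
`y = eᵗ` turns it into `-a cosh t` with Jacobian `eᵗ`. As the rest of the integrand is even in `t`,
`eᵗ` may be replaced by `cosh t`, and the integral over `ℝ` folds onto `(0, ∞)`.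
-/

open MeasureTheory Set

/-- The modified Bessel function of the second kind of order 1, via its standard
integral representation K₁(x) = ∫₀^∞ e^{−x cosh t} cosh t dt. -/
noncomputable def besselK1 (x : ℝ) : ℝ :=
  ∫ t in Ioi (0:ℝ), Real.exp (-x * Real.cosh t) * Real.cosh t

open Real

section ExpSubstitution

variable {E : Type*} [NormedAddCommGroup E] [NormedSpace ℝ E]

theorem integral_comp_exp (g : ℝ → E) : ∫ t, exp t • g (exp t) = ∫ x in Ioi 0, g x := by
  rw [← range_exp, ← image_univ, integral_image_eq_integral_abs_deriv_smul MeasurableSet.univ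
    (fun t _ ↦ (hasDerivAt_exp t).hasDerivWithinAt) exp_injective.injOn]
  simp [abs_of_pos (exp_pos _)]

theorem integrable_comp_exp_iff (g : ℝ → E) :
    Integrable (fun t ↦ exp t • g (exp t)) ↔ IntegrableOn g (Ioi 0) := by
  rw [← range_exp, ← image_univ, integrableOn_image_iff_integrableOn_abs_deriv_smul
    MeasurableSet.univ (fun t _ ↦ (hasDerivAt_exp t).hasDerivWithinAt) exp_injective.injOn]
  simp [abs_of_pos (exp_pos _)]

end ExpSubstitution

theorem Function.Even.integral_mul_exp {g : ℝ → ℝ} (hg : g.Even)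
    (hint : Integrable fun t ↦ g t * exp t) :
    ∫ t, g t * exp t = 2 * ∫ t in Ioi 0, g t * cosh t := by
  have hint_neg : Integrable fun t ↦ g t * exp (-t) := by
    simpa only [hg.eq] using hint.comp_neg
  have hreflect : ∫ t, g t * exp (-t) = ∫ t, g t * exp t := by
    simpa only [hg.eq] using integral_neg_eq_self (fun t ↦ g t * exp t) volume
  have hcosh : ∫ t, g t * exp t = ∫ t, g t * cosh t := by
    have : ∫ t, g t * cosh t = (∫ t, (g t * exp t + g t * exp (-t))) / 2 := by
      rw [← integral_div]
      congr 1 with t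
      rw [cosh_eq]; ring
    rw [this, integral_add hint hint_neg, hreflect]; ring
  rw [hcosh, ← integral_comp_abs]
  congr 1 with t
  rcases abs_choice t with h | h <;> simp [h, hg.eq]

theorem integral_exp_neg_mul_add_inv_eq_two_mul_besselK1 {a : ℝ} (ha : 0 < a) :
    ∫ y in Ioi 0, exp (-(a / 2) * (y + y⁻¹)) = 2 * besselK1 a := by
  have hsubst (t : ℝ) :
      exp t • exp (-(a / 2) * (exp t + (exp t)⁻¹)) = exp (-a * cosh t) * exp t := by
    rw [smul_eq_mul, cosh_eq, ← exp_neg]; ring_nf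
  have hdom : IntegrableOn (fun y ↦ exp (-(a / 2) * (y + y⁻¹))) (Ioi 0) := by
    refine (exp_neg_integrableOn_Ioi 0 (half_pos ha)).mono' (by fun_prop) ?_
    filter_upwards [ae_restrict_mem measurableSet_Ioi] with y (hy : 0 < y)
    rw [norm_of_nonneg (exp_nonneg _), exp_le_exp]
    nlinarith [inv_pos.2 hy]
  have hint : Integrable fun t ↦ exp (-a * cosh t) * exp t := by
    simpa only [hsubst] using (integrable_comp_exp_iff _).2 hdom
  rw [← integral_comp_exp]
  simp only [hsubst]
  exact Function.Even.integral_mul_exp (fun t ↦ by simp) hint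

/-- ∫₀^∞ exp(−β/(4x) − γx) dx = √(β/γ)·K₁(√(βγ)) for β, γ > 0. -/
theorem integral_exp_inv_add_linear_eq_besselK1 (β γ : ℝ) (hβ : 0 < β) (hγ : 0 < γ) :
    ∫ x in Ioi (0:ℝ), Real.exp (-β / (4 * x) - γ * x) =
      Real.sqrt (β / γ) * besselK1 (Real.sqrt (β * γ)) := by
  have hsq : γ * √(β / γ) = √(β * γ) := by
    rw [← sqrt_sq hγ.le, ← sqrt_mul (sq_nonneg _), sqrt_sq hγ.le]
    field_simp
  have hγc : γ * (√(β / γ) / 2) = √(β * γ) / 2 := by rw [← hsq]; ring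
  have hca : √(β / γ) / 2 * √(β * γ) = β / 2 := by
    rw [← hsq, show √(β / γ) / 2 * (γ * √(β / γ)) = γ * (√(β / γ) * √(β / γ)) / 2 by ring,
      mul_self_sqrt (by positivity)]
    field_simp
  set a := √(β * γ)
  set c := √(β / γ) / 2
  have ha : 0 < a := by positivity
  have hc : 0 < c := by positivity
  calc ∫ x in Ioi 0, exp (-β / (4 * x) - γ * x)
      = c * ∫ y in Ioi 0, exp (-β / (4 * (c * y)) - γ * (c * y)) := by
        rw [← smul_eq_mul, integral_comp_mul_left_Ioi' (fun x ↦ exp (-β / (4 * x) - γ * x)) 0 hc,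
          mul_zero]
    _ = c * ∫ y in Ioi 0, exp (-(a / 2) * (y + y⁻¹)) := by
        congr 1
        refine setIntegral_congr_fun measurableSet_Ioi fun y (hy : 0 < y) ↦ ?_
        congr 1
        field_simp
        linear_combination 4 * hca - 8 * c * y ^ 2 * hγc
    _ = √(β / γ) * besselK1 a := by
        rw [integral_exp_neg_mul_add_inv_eq_two_mul_besselK1 ha]; ring
end

section
/- In discrete time EH with AF relaying, the fraction of blocks that are IT blocks equals 1/(E{X}+1) = 1/(1 + Pᵣd₁ᵐ/(2ηPₛ)), and the throughput equals τ = e^{−(a+d)/c}·u·K₁(u) / (2(1 + Pᵣd₁ᵐ/(2ηPₛ))), where a = Pₛd₂ᵐσ²_{n_d}γ₀, c = PₛPᵣ, d = Pᵣd₁ᵐσ²_{n_r}γ₀, b = d₁ᵐd₂ᵐσ²_{n_r}σ²_{n_d}γ₀, u = √(4(ad+bc)/c²). -/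
/-!
Given |h|² = x, the link is not in outage iff |g|² ≥ (a x + b)/(c x - d), an event of probability
exp (-(a x + b)/(c x - d)) when c x > d and of probability 0 otherwise. The shift x = t + d/c turns
the outer integral into exp (-(a + d)/c) ∫₀^∞ exp (-t - β²/t) dt with β² = (a d + b c)/c² = (u/2)²,
and t = β eˢ turns this into β ∫ eˢ exp (-2β cosh s) ds over ℝ; replacing eˢ by its even part
cosh s gives β · 2 K₁(2β) = u K₁(u).
-/

open MeasureTheory Set

section

open Real

variable {E : Type*} [NormedAddCommGroup E] [NormedSpace ℝ E]

lemma integral_Ioi_comp_add_right (g : ℝ → E) (a d : ℝ) :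
    ∫ x in Ioi a, g (x + d) = ∫ x in Ioi (a + d), g x := by
  simpa [preimage_add_const_Ioi] using
    (measurePreserving_add_right volume d).setIntegral_preimage_emb
      (measurableEmbedding_addRight d) g (Ioi (a + d))

lemma integral_exp_smul_comp_exp (g : ℝ → E) :
    ∫ x, exp x • g (exp x) = ∫ y in Ioi 0, g y := by
  simpa [← range_exp, abs_of_pos (exp_pos _)] using
    (integral_image_eq_integral_abs_deriv_smul MeasurableSet.univ
      (fun x _ => (hasDerivAt_exp x).hasDerivWithinAt) exp_injective.injOn g).symm

lemma integrable_exp_smul_comp_exp_iff (g : ℝ → E) :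
    Integrable (fun x => exp x • g (exp x)) ↔ IntegrableOn g (Ioi 0) := by
  simpa [← range_exp, abs_of_pos (exp_pos _)] using
    (integrableOn_image_iff_integrableOn_abs_deriv_smul MeasurableSet.univ
      (fun x _ => (hasDerivAt_exp x).hasDerivWithinAt) exp_injective.injOn g).symm

lemma integral_Ioi_ite_mul_lt_mul_exp_neg {k m : ℝ} (hm : 0 < m) :
    ∫ y in Ioi 0, (if y * k < m then 0 else 1) * exp (-y) =
      if 0 < k then exp (-(m / k)) else 0 := by
  split_ifs with hk
  · calc ∫ y in Ioi 0, (if y * k < m then 0 else 1) * exp (-y)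
        = ∫ y in Ioi 0, (Ici (m / k)).indicator (fun y => exp (-y)) y := by
          refine setIntegral_congr_fun measurableSet_Ioi fun y _ => ?_
          by_cases hy : m / k ≤ y
          · rw [indicator_of_mem (mem_Ici.2 hy), if_neg (not_lt.2 ((div_le_iff₀ hk).1 hy)),
              one_mul]
          · rw [indicator_of_notMem (mt mem_Ici.1 hy), if_pos ((lt_div_iff₀ hk).1 (not_le.1 hy)),
              zero_mul]
      _ = exp (-(m / k)) := by
          rw [setIntegral_indicator measurableSet_Ici,
            inter_eq_self_of_subset_right (Ici_subset_Ioi.2 (div_pos hm hk)),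
            integral_Ici_eq_integral_Ioi, integral_exp_neg_Ioi]
  · refine setIntegral_eq_zero_of_forall_eq_zero fun y hy => ?_
    rw [if_pos (by nlinarith [mem_Ioi.1 hy]), zero_mul]

lemma integral_Ioi_ite_snr_lt_mul_exp_neg {Ps Pr d1m d2m σr σd γ₀ a b c d x : ℝ}
    (hPs : 0 < Ps) (hPr : 0 < Pr) (hd1m : 0 < d1m) (hd2m : 0 < d2m)
    (hσr : 0 < σr) (hσd : 0 < σd) (hγ₀ : 0 < γ₀)
    (ha : a = Ps * d2m * σd * γ₀) (hb : b = d1m * d2m * σr * σd * γ₀)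
    (hc : c = Ps * Pr) (hd : d = Pr * d1m * σr * γ₀) (hx : 0 < x) :
    ∫ y in Ioi 0,
        (if Ps * Pr * x * y / (Pr * y * d1m * σr + d2m * σd * (Ps * x + d1m * σr)) < γ₀
          then 0 else 1) * exp (-x) * exp (-y) =
      if 0 < c * x - d then exp (-x) * exp (-((a * x + b) / (c * x - d))) else 0 := by
  calc _ = ∫ y in Ioi 0, exp (-x) *
        ((if y * (c * x - d) < a * x + b then 0 else 1) * exp (-y)) := by
        refine setIntegral_congr_fun measurableSet_Ioi fun y (hy : 0 < y) => ?_
        have hsnr : Ps * Pr * x * y / (Pr * y * d1m * σr + d2m * σd * (Ps * x + d1m * σr)) < γ₀ ↔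
            y * (c * x - d) < a * x + b := by
          rw [div_lt_iff₀ (by positivity), ha, hb, hc, hd]
          constructor <;> intro h <;> linarith
        simp only [hsnr]
        ring
    _ = _ := by
        rw [integral_const_mul, integral_Ioi_ite_mul_lt_mul_exp_neg (by rw [ha, hb]; positivity),
          mul_ite, mul_zero]

lemma integral_Ioi_ite_exp_neg_mul_exp_neg_div {a b c d : ℝ} (hc : 0 < c) (hd : 0 ≤ d) :
    ∫ x in Ioi 0, (if 0 < c * x - d then exp (-x) * exp (-((a * x + b) / (c * x - d))) else 0) =
      exp (-((a + d) / c)) * ∫ t in Ioi 0, exp (-(t + (a * d + b * c) / c ^ 2 / t)) := by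
  set F : ℝ → ℝ := fun x => exp (-x) * exp (-((a * x + b) / (c * x - d)))
  have hshift : ∀ t ∈ Ioi (0 : ℝ),
      F (t + d / c) = exp (-((a + d) / c)) * exp (-(t + (a * d + b * c) / c ^ 2 / t)) := by
    intro t ht
    have : c * (t + d / c) - d = c * t := by field_simp; ring
    simp only [F, this, ← exp_add]
    congr 1
    field_simp [(mem_Ioi.1 ht).ne']
    ring
  calc ∫ x in Ioi 0, (if 0 < c * x - d then F x else 0)
      = ∫ x in Ioi (0 + d / c), F x := by
        rw [zero_add, ← inter_eq_self_of_subset_right (Ioi_subset_Ioi (div_nonneg hd hc.le)),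
          ← setIntegral_indicator measurableSet_Ioi]
        refine setIntegral_congr_fun measurableSet_Ioi fun x _ => ?_
        simp only [indicator, mem_Ioi, div_lt_iff₀ hc, sub_pos, mul_comm x c]
    _ = ∫ t in Ioi 0, F (t + d / c) := (integral_Ioi_comp_add_right F 0 (d / c)).symm
    _ = _ := by rw [setIntegral_congr_fun measurableSet_Ioi hshift, integral_const_mul]

lemma integral_exp_mul_exp_neg_mul_cosh {u : ℝ}
    (h : Integrable (fun x => exp x * exp (-(u * cosh x)))) :
    ∫ x, exp x * exp (-(u * cosh x)) = 2 * besselK1 u := by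
  have hneg : Integrable (fun x => exp (-x) * exp (-(u * cosh x))) := by
    simpa only [cosh_neg] using h.comp_neg
  have hsymm : ∫ x, exp (-x) * exp (-(u * cosh x)) = ∫ x, exp x * exp (-(u * cosh x)) := by
    conv_lhs => rw [← integral_neg_eq_self]
    simp only [neg_neg, cosh_neg]
  calc ∫ x, exp x * exp (-(u * cosh x))
      = ((∫ x, exp x * exp (-(u * cosh x))) + ∫ x, exp (-x) * exp (-(u * cosh x))) / 2 := by
        rw [hsymm, add_self_div_two]
    _ = ∫ x, (exp x * exp (-(u * cosh x)) + exp (-x) * exp (-(u * cosh x))) / 2 := by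
        rw [integral_div, integral_add h hneg]
    _ = ∫ x, (fun t => cosh t * exp (-(u * cosh t))) |x| := by
        congr 1 with x
        simp only [cosh_abs]
        rw [cosh_eq]
        ring
    _ = 2 * besselK1 u := by
        rw [integral_comp_abs (f := fun t => cosh t * exp (-(u * cosh t))), besselK1]
        congr 1
        refine setIntegral_congr_fun measurableSet_Ioi fun t _ => ?_
        rw [neg_mul, mul_comm]

lemma integrableOn_exp_neg_mul_add_inv {β : ℝ} (hβ : 0 < β) :
    IntegrableOn (fun s => exp (-(β * (s + s⁻¹)))) (Ioi 0) := by
  refine (exp_neg_integrableOn_Ioi 0 hβ).mono' (by fun_prop) ?_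
  filter_upwards [ae_restrict_mem measurableSet_Ioi] with s hs
  have : 0 ≤ β * s⁻¹ := mul_nonneg hβ.le (inv_nonneg.2 (le_of_lt hs))
  rw [norm_of_nonneg (exp_pos _).le, exp_le_exp]
  linarith

lemma integral_Ioi_exp_neg_add_sq_div {u : ℝ} (hu : 0 < u) :
    ∫ t in Ioi 0, exp (-(t + (u / 2) ^ 2 / t)) = u * besselK1 u := by
  have hβ : 0 < u / 2 := half_pos hu
  have hcosh : ∀ x,
      exp x • exp (-(u / 2 * (exp x + (exp x)⁻¹))) = exp x * exp (-(u * cosh x)) := by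
    intro x
    rw [smul_eq_mul, cosh_eq, ← exp_neg]
    ring_nf
  have hint : Integrable (fun x => exp x * exp (-(u * cosh x))) := by
    simpa only [hcosh] using
      (integrable_exp_smul_comp_exp_iff _).2 (integrableOn_exp_neg_mul_add_inv hβ)
  calc ∫ t in Ioi 0, exp (-(t + (u / 2) ^ 2 / t))
      = u / 2 * ∫ s in Ioi 0, exp (-(u / 2 * s + (u / 2) ^ 2 / (u / 2 * s))) := by
        rw [← smul_eq_mul, integral_comp_mul_left_Ioi' (fun t => exp (-(t + (u / 2) ^ 2 / t))) 0 hβ,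
          mul_zero]
    _ = u / 2 * ∫ s in Ioi 0, exp (-(u / 2 * (s + s⁻¹))) := by
        simp only [sq, mul_div_mul_left _ _ hβ.ne']
        simp only [div_eq_mul_inv, mul_add]
    _ = u / 2 * ∫ x, exp x * exp (-(u * cosh x)) := by
        rw [← integral_exp_smul_comp_exp]
        simp only [hcosh]
    _ = u * besselK1 u := by
        rw [integral_exp_mul_exp_neg_mul_cosh hint]
        ring

end

theorem throughput_discrete_AF_general
    (Ps Pr d1m d2m σr σd γ₀ η : ℝ)
    (hPs : 0 < Ps) (hPr : 0 < Pr) (hd1m : 0 < d1m) (hd2m : 0 < d2m)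
    (hσr : 0 < σr) (hσd : 0 < σd) (hγ₀ : 0 < γ₀)
    (a b c d u EX : ℝ)
    (ha : a = Ps * d2m * σd * γ₀) (hb : b = d1m * d2m * σr * σd * γ₀)
    (hc : c = Ps * Pr) (hd : d = Pr * d1m * σr * γ₀)
    (hu : u = Real.sqrt (4 * (a * d + b * c) / c ^ 2))
    (hEX : EX = Pr * d1m / (2 * η * Ps)) :
    1 / (EX + 1) = 1 / (1 + Pr * d1m / (2 * η * Ps)) ∧
    (1 / 2) *
      (∫ x in Ioi (0:ℝ), ∫ y in Ioi (0:ℝ),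
        (if Ps * Pr * x * y /
              (Pr * y * d1m * σr + d2m * σd * (Ps * x + d1m * σr)) < γ₀
          then (0:ℝ) else 1) * Real.exp (-x) * Real.exp (-y)) *
      (1 / (EX + 1)) =
    Real.exp (-((a + d) / c)) * u * besselK1 u /
      (2 * (1 + Pr * d1m / (2 * η * Ps))) := by
  have hc0 : 0 < c := by rw [hc]; positivity
  have hd0 : 0 ≤ d := by rw [hd]; positivity
  have hadbc : 0 < a * d + b * c := by rw [ha, hb, hc, hd]; positivity
  have hu0 : 0 < u := by rw [hu]; positivity
  have hu2 : (u / 2) ^ 2 = (a * d + b * c) / c ^ 2 := by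
    rw [div_pow, hu, Real.sq_sqrt (by positivity)]; ring
  have hfrac : 1 / (EX + 1) = 1 / (1 + Pr * d1m / (2 * η * Ps)) := by rw [hEX, add_comm]
  refine ⟨hfrac, ?_⟩
  rw [setIntegral_congr_fun measurableSet_Ioi fun x (hx : 0 < x) =>
      integral_Ioi_ite_snr_lt_mul_exp_neg hPs hPr hd1m hd2m hσr hσd hγ₀ ha hb hc hd hx,
    integral_Ioi_ite_exp_neg_mul_exp_neg_div hc0 hd0, ← hu2, integral_Ioi_exp_neg_add_sq_div hu0,
    hfrac, one_div_mul_eq_div, div_mul_div_comm, mul_one, ← mul_assoc]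

/-- Theorem 2: throughput of discrete time EH in AF relaying. The IT-block
fraction equals 1/(E{X}+1) = 1/(1 + Pᵣd₁ᵐ/(2ηPₛ)), and the throughput
τ = (1/2)·E{1−I₀}·(IT-block fraction) equals e^{−(a+d)/c}·u·K₁(u)/(2(1+Pᵣd₁ᵐ/(2ηPₛ))). -/
theorem throughput_discrete_AF
    (Ps Pr d1m d2m σr σd γ₀ η : ℝ)
    (hPs : 0 < Ps) (hPr : 0 < Pr) (hd1m : 0 < d1m) (hd2m : 0 < d2m)
    (hσr : 0 < σr) (hσd : 0 < σd) (hγ₀ : 0 < γ₀) (hη : 0 < η)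
    (a b c d u EX : ℝ)
    (ha : a = Ps * d2m * σd * γ₀) (hb : b = d1m * d2m * σr * σd * γ₀)
    (hc : c = Ps * Pr) (hd : d = Pr * d1m * σr * γ₀)
    (hu : u = Real.sqrt (4 * (a * d + b * c) / c ^ 2))
    (hEX : EX = Pr * d1m / (2 * η * Ps)) :
    1 / (EX + 1) = 1 / (1 + Pr * d1m / (2 * η * Ps)) ∧
    (1 / 2) *
      (∫ x in Ioi (0:ℝ), ∫ y in Ioi (0:ℝ),
        (if Ps * Pr * x * y /
              (Pr * y * d1m * σr + d2m * σd * (Ps * x + d1m * σr)) < γ₀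
          then (0:ℝ) else 1) * Real.exp (-x) * Real.exp (-y)) *
      (1 / (EX + 1)) =
    Real.exp (-((a + d) / c)) * u * besselK1 u /
      (2 * (1 + Pr * d1m / (2 * η * Ps))) :=
  throughput_discrete_AF_general Ps Pr d1m d2m σr σd γ₀ η hPs hPr hd1m hd2m hσr hσd hγ₀ a b c d u EX
    ha hb hc hd hu hEX
end

section
/- For positive constants a, b, c, d, η, Pₛ, Pᵣ, d₁ᵐ, the throughput of Protocol 1 satisfies τ = (e^{−(a+d)/c}/2)·(u·K₁(u) − c·d₁ᵐPᵣ·ν), where u = √(4(ad+bc)/c²) and ν = ∫₀^∞ e^{−(x + (ad+bc)/(c²x))}/(2cηPₛx + 2ηPₛd + cd₁ᵐPᵣ) dx, given that τ = ∫_{d/c}^∞ (1 − α(z))/2 · e^{−(az+b)/(cz−d)} · e^{−z} dz with α(z) = d₁ᵐPᵣ/(2ηPₛz + d₁ᵐPᵣ). -/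
/-!
The substitution `z = x + d/c` turns `(a z + b)/(c z - d) + z` into
`(a + d)/c + x + k/x` with `k = (a d + b c)/c²`, and `1 - α(z)` into
`1 - c d₁ᵐ Pᵣ / (2 c η Pₛ x + 2 η Pₛ d + c d₁ᵐ Pᵣ)`; this splits `τ` into
`e^{-(a+d)/c}/2` times `∫₀^∞ e^{-(x + k/x)} dx - c d₁ᵐ Pᵣ ν`. With `x = √k eᵗ` the remaining
integral becomes `∫_ℝ √k eᵗ e^{-2√k cosh t} dt`, and folding `t ↦ -t` onto `t > 0` gives
`2√k K₁(2√k) = u K₁(u)`.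
-/

open MeasureTheory Set

open Real

theorem setIntegral_Ioi_comp_add_right {E : Type*} [NormedAddCommGroup E] [NormedSpace ℝ E]
    (g : ℝ → E) (a b : ℝ) : ∫ x in Ioi a, g (x + b) = ∫ x in Ioi (a + b), g x := by
  simpa only [preimage_add_const_Ioi, add_sub_cancel_right] using
    (measurePreserving_add_right volume b).setIntegral_preimage_emb
      (measurableEmbedding_addRight b) g (Ioi (a + b))

theorem IntegrableOn.div_of_le {α : Type*} [MeasurableSpace α] {μ : Measure α} {f g : α → ℝ}
    {s : Set α} {m : ℝ} (hf : IntegrableOn f s μ) (hs : MeasurableSet s) (hg : Measurable g)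
    (hm : 0 < m) (hgm : ∀ x ∈ s, m ≤ g x) : IntegrableOn (fun x => f x / g x) s μ := by
  simp_rw [div_eq_mul_inv]
  refine hf.mul_bdd (c := m⁻¹) hg.inv.aestronglyMeasurable ?_
  filter_upwards [ae_restrict_mem hs] with x hx
  rw [norm_inv, norm_of_nonneg (hm.trans_le (hgm x hx)).le]
  exact inv_anti₀ hm (hgm x hx)

section ExpSubstitution

variable {E : Type*} [NormedAddCommGroup E] [NormedSpace ℝ E] {s : ℝ}

theorem image_const_mul_exp (hs : 0 < s) : (fun t => s * exp t) '' univ = Ioi 0 := by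
  rw [← image_const_mul_Ioi_zero hs, ← Real.range_exp, image_univ, ← range_comp]
  rfl

theorem hasDerivWithinAt_const_mul_exp (t : ℝ) :
    HasDerivWithinAt (fun t => s * exp t) (s * exp t) univ t :=
  ((hasDerivAt_exp t).const_mul s).hasDerivWithinAt

theorem injOn_const_mul_exp (hs : 0 < s) : InjOn (fun t => s * exp t) univ :=
  fun _ _ _ _ h => exp_injective (mul_left_cancel₀ hs.ne' h)

theorem integral_Ioi_zero_eq_integral_comp_const_mul_exp (hs : 0 < s) (g : ℝ → E) :
    ∫ x in Ioi 0, g x = ∫ t, (s * exp t) • g (s * exp t) := by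
  rw [← image_const_mul_exp hs, integral_image_eq_integral_abs_deriv_smul MeasurableSet.univ
    (fun t _ => hasDerivWithinAt_const_mul_exp t) (injOn_const_mul_exp hs), Measure.restrict_univ]
  simp_rw [abs_of_pos (mul_pos hs (exp_pos _))]

theorem integrableOn_Ioi_zero_iff_integrable_comp_const_mul_exp (hs : 0 < s) (g : ℝ → E) :
    IntegrableOn g (Ioi 0) ↔ Integrable (fun t => (s * exp t) • g (s * exp t)) := by
  rw [← image_const_mul_exp hs, integrableOn_image_iff_integrableOn_abs_deriv_smul
    MeasurableSet.univ (fun t _ => hasDerivWithinAt_const_mul_exp t) (injOn_const_mul_exp hs),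
    integrableOn_univ]
  simp_rw [abs_of_pos (mul_pos hs (exp_pos _))]

end ExpSubstitution

theorem integral_eq_integral_Ioi_add_comp_neg {E : Type*} [NormedAddCommGroup E]
    [NormedSpace ℝ E] {f : ℝ → E} (hf : Integrable f) :
    ∫ t, f t = ∫ t in Ioi 0, (f t + f (-t)) := by
  rw [integral_add hf.integrableOn hf.comp_neg.integrableOn, integral_comp_neg_Ioi, neg_zero,
    ← intervalIntegral.integral_Iic_add_Ioi hf.integrableOn hf.integrableOn, add_comm]

theorem integrableOn_exp_neg_add_div_Ioi {k : ℝ} (hk : 0 ≤ k) :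
    IntegrableOn (fun x => exp (-(x + k / x))) (Ioi 0) := by
  refine (exp_neg_integrableOn_Ioi 0 one_pos).mono' (by fun_prop) ?_
  filter_upwards [ae_restrict_mem measurableSet_Ioi] with x (hx : 0 < x)
  rw [norm_of_nonneg (exp_pos _).le, exp_le_exp, neg_mul, one_mul, neg_le_neg_iff,
    le_add_iff_nonneg_right]
  positivity

theorem integral_exp_neg_add_div_Ioi {k : ℝ} (hk : 0 < k) :
    ∫ x in Ioi 0, exp (-(x + k / x)) = √(4 * k) * besselK1 √(4 * k) := by
  set s := √k
  have hs : 0 < s := sqrt_pos.2 hk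
  have h4k : √(4 * k) = 2 * s := by
    rw [sqrt_mul zero_le_four, show (4 : ℝ) = 2 ^ 2 by norm_num, sqrt_sq zero_le_two]
  have hF : ∀ t, (s * exp t) • exp (-(s * exp t + k / (s * exp t))) =
      s * exp t * exp (-(2 * s) * cosh t) := fun t => by
    rw [smul_eq_mul, cosh_eq, ← sq_sqrt hk.le, exp_neg t]
    congr 2
    field_simp
    ring
  have hint := (integrableOn_Ioi_zero_iff_integrable_comp_const_mul_exp hs _).1
    (integrableOn_exp_neg_add_div_Ioi hk.le)
  simp_rw [hF] at hint
  rw [integral_Ioi_zero_eq_integral_comp_const_mul_exp hs, h4k, besselK1,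
    ← integral_const_mul]
  simp_rw [hF]
  rw [integral_eq_integral_Ioi_add_comp_neg hint]
  refine setIntegral_congr_fun measurableSet_Ioi fun t _ => ?_
  rw [cosh_neg, cosh_eq]
  ring

section Throughput

variable {a b c d η Ps Pr d1m : ℝ}

theorem throughput_exponent_shift (hc : c ≠ 0) {x : ℝ} (hx : x ≠ 0) :
    (a * (x + d / c) + b) / (c * (x + d / c) - d) + (x + d / c) =
      (a + d) / c + (x + (a * d + b * c) / (c ^ 2 * x)) := by
  field_simp
  ring

theorem throughput_integrand_shift (hc : c ≠ 0) {x : ℝ} (hx : x ≠ 0) :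
    ((1 - d1m * Pr / (2 * η * Ps * (x + d / c) + d1m * Pr)) / 2) *
        exp (-((a * (x + d / c) + b) / (c * (x + d / c) - d))) * exp (-(x + d / c)) =
      exp (-((a + d) / c)) / 2 *
        (exp (-(x + (a * d + b * c) / (c ^ 2 * x))) - c * d1m * Pr *
          (exp (-(x + (a * d + b * c) / (c ^ 2 * x))) /
            (2 * c * η * Ps * x + 2 * η * Ps * d + c * d1m * Pr))) := by
  have hden : 2 * c * η * Ps * x + 2 * η * Ps * d + c * d1m * Pr =
      c * (2 * η * Ps * (x + d / c) + d1m * Pr) := by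
    field_simp
  have hfrac : c * d1m * Pr / (c * (2 * η * Ps * (x + d / c) + d1m * Pr)) =
      d1m * Pr / (2 * η * Ps * (x + d / c) + d1m * Pr) := by
    rw [mul_assoc, mul_div_mul_left _ _ hc]
  rw [mul_assoc, ← exp_add, ← neg_add, throughput_exponent_shift hc hx, neg_add, exp_add, hden,
    ← hfrac]
  ring

end Throughput

/-- Theorem 1: throughput of continuous time EH in AF relaying,
τ = (e^{−(a+d)/c}/2)·(u·K₁(u) − c·d₁ᵐPᵣ·ν). -/
theorem throughput_continuous_AF
    (a b c d η Ps Pr d1m : ℝ)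
    (ha : 0 < a) (hb : 0 < b) (hc : 0 < c) (hd : 0 < d)
    (hη : 0 < η) (hPs : 0 < Ps) (hPr : 0 < Pr) (hd1m : 0 < d1m)
    (u ν τ : ℝ)
    (hu : u = Real.sqrt (4 * (a * d + b * c) / c ^ 2))
    (hν : ν = ∫ x in Ioi (0:ℝ),
        Real.exp (-(x + (a * d + b * c) / (c ^ 2 * x))) /
          (2 * c * η * Ps * x + 2 * η * Ps * d + c * d1m * Pr))
    (hτ : τ = ∫ z in Ioi (d / c),
        ((1 - d1m * Pr / (2 * η * Ps * z + d1m * Pr)) / 2) *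
          Real.exp (-((a * z + b) / (c * z - d))) * Real.exp (-z)) :
    τ = (Real.exp (-((a + d) / c)) / 2) * (u * besselK1 u - c * d1m * Pr * ν) := by
  have hk : 0 < (a * d + b * c) / c ^ 2 := by positivity
  have hA := integrableOn_exp_neg_add_div_Ioi hk.le
  simp_rw [div_div] at hA
  have hAD : IntegrableOn (fun x => exp (-(x + (a * d + b * c) / (c ^ 2 * x))) /
      (2 * c * η * Ps * x + 2 * η * Ps * d + c * d1m * Pr)) (Ioi 0) :=
    IntegrableOn.div_of_le hA measurableSet_Ioi (by fun_prop) (by positivity : 0 < c * d1m * Pr)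
      fun x (hx : 0 < x) => le_add_of_nonneg_left (by positivity)
  rw [hτ, ← zero_add (d / c), ← setIntegral_Ioi_comp_add_right,
    setIntegral_congr_fun measurableSet_Ioi
      fun x (hx : 0 < x) => throughput_integrand_shift hc.ne' hx.ne',
    integral_const_mul, integral_sub hA (hAD.const_mul _), integral_const_mul, ← hν,
    hu, mul_div_assoc, ← integral_exp_neg_add_div_Ioi hk]
  simp_rw [div_div]
end
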